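/- arXiv:1810.00270 — 6 statements merged into one kernel-verified Lean document; each statement's English description precedes it below -/
import Mathlib

section
/- Let (X,Y,<) be a finite bipartite poset in which every comparability edge extends to a perfect matching (a regular bipartite poset), and let k be a natural number. Then the following are equivalent: (1) for every non-empty A ⊆ X, |A↑ ∩ Y| ≥ min(|A|+k, |Y|); (2) for every non-empty B ⊆ Y, |B↓ ∩ X| ≥ min(|B|+k, |X|). -/
/-- A bipartite poset `(X, Y, <)` is regular if every comparability edge `x < y`
with `x ∈ X`, `y ∈ Y` extends to a perfect matching between `X` and `Y`. -/
def IsRegularBipartite {α : Type*} [PartialOrder α] (X Y : Finset α) : Prop :=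
  ∀ x, ∀ hx : x ∈ X, ∀ y, ∀ hy : y ∈ Y, x < y →
    ∃ f : {a // a ∈ X} → {b // b ∈ Y},
      Function.Bijective f ∧ (∀ a : {a // a ∈ X}, (a : α) < (f a : α)) ∧ f ⟨x, hx⟩ = ⟨y, hy⟩


open Finset in
private lemma key_surplus {α : Type*} [DecidableEq α] (r : α → α → Prop) [DecidableRel r]
    (X Y : Finset α) (k : ℕ)
    (hcard : (∃ x ∈ X, ∃ y ∈ Y, r x y) → X.card = Y.card)
    (h1 : ∀ A : Finset α, A ⊆ X → A.Nonempty →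
      min (A.card + k) Y.card ≤ (Y.filter fun y => ∃ x ∈ A, r x y).card) :
    ∀ B : Finset α, B ⊆ Y → B.Nonempty →
      min (B.card + k) X.card ≤ (X.filter fun x => ∃ y ∈ B, r x y).card := by
  intro B hBY hBne
  rcases X.eq_empty_or_nonempty with hX | hXne
  · subst hX; simp
  -- There is at least one edge, hence |X| = |Y|.
  have hYne : Y.Nonempty := ⟨hBne.choose, hBY hBne.choose_spec⟩
  have hedge : ∃ x ∈ X, ∃ y ∈ Y, r x y := by
    have := h1 X le_rfl hXne
    have hmin : 1 ≤ min (X.card + k) Y.card := by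
      have h1' : 1 ≤ X.card + k := le_trans hXne.card_pos (Nat.le_add_right _ _)
      exact le_min h1' hYne.card_pos
    obtain ⟨y, hy⟩ := Finset.card_pos.mp (lt_of_lt_of_le hmin this)
    rw [Finset.mem_filter] at hy
    obtain ⟨x, hx, hr⟩ := hy.2
    exact ⟨x, hx, y, hy.1, hr⟩
  have hXY : X.card = Y.card := hcard hedge
  set D := X.filter fun x => ∃ y ∈ B, r x y with hD
  set A := X \ D with hA
  rcases A.eq_empty_or_nonempty with hAe | hAne
  · -- D = X
    have hDX : D = X := by
      have h1 : D ⊆ X := Finset.filter_subset _ _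
      have h2 : X ⊆ D := by
        intro x hx
        by_contra hxD
        have : x ∈ A := Finset.mem_sdiff.mpr ⟨hx, hxD⟩
        simp [hAe] at this
      exact le_antisymm h1 h2
    rw [hDX]
    exact min_le_right _ _
  · have hAX : A ⊆ X := Finset.sdiff_subset
    have hNA : (Y.filter fun y => ∃ x ∈ A, r x y) ⊆ Y \ B := by
      intro y hy
      rw [Finset.mem_filter] at hy
      obtain ⟨hyY, x, hxA, hr⟩ := hy
      refine Finset.mem_sdiff.mpr ⟨hyY, fun hyB => ?_⟩
      have hxD : x ∈ D := Finset.mem_filter.mpr ⟨(Finset.mem_sdiff.mp hxA).1, y, hyB, hr⟩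
      exact (Finset.mem_sdiff.mp hxA).2 hxD
    have hle : min (A.card + k) Y.card ≤ Y.card - B.card := by
      calc min (A.card + k) Y.card ≤ (Y.filter fun y => ∃ x ∈ A, r x y).card :=
            h1 A hAX hAne
        _ ≤ (Y \ B).card := Finset.card_le_card hNA
        _ = Y.card - B.card := Finset.card_sdiff_of_subset hBY
    have hBle : B.card ≤ Y.card := Finset.card_le_card hBY
    have hlt : Y.card - B.card < Y.card :=
      Nat.sub_lt (lt_of_lt_of_le hBne.card_pos hBle) hBne.card_pos
    have hmin : min (A.card + k) Y.card = A.card + k := by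
      rcases le_or_gt (A.card + k) Y.card with h | h
      · exact min_eq_left h
      · rw [min_eq_right h.le] at hle; omega
    rw [hmin] at hle
    have hsum : A.card + k + B.card ≤ Y.card := by omega
    have hAD : A.card + D.card = X.card := by
      rw [hA]
      exact Finset.card_sdiff_add_card_eq_card (Finset.filter_subset _ _)
    have : B.card + k ≤ D.card := by omega
    exact le_trans (min_le_left _ _) this

private lemma card_eq_of_edge {α : Type*} [PartialOrder α] (X Y : Finset α)
    (hreg : IsRegularBipartite X Y) (h : ∃ x ∈ X, ∃ y ∈ Y, x < y) : X.card = Y.card := by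
  obtain ⟨x, hx, y, hy, hxy⟩ := h
  obtain ⟨f, hf, -, -⟩ := hreg x hx y hy hxy
  have := Fintype.card_of_bijective hf
  simpa [Fintype.card_coe] using this

/-- Proposition 1: for a regular bipartite poset the two surplus conditions are equivalent. -/
theorem stmt0 {α : Type*} [PartialOrder α] [Fintype α]
    (X Y : Finset α) (hdisj : Disjoint X Y)
    (hXanti : IsAntichain (· ≤ ·) (X : Set α))
    (hYanti : IsAntichain (· ≤ ·) (Y : Set α))
    (hdir : ∀ x ∈ X, ∀ y ∈ Y, ¬ y < x)
    (hreg : IsRegularBipartite X Y) (k : ℕ) :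
    ((∀ A : Finset α, A ⊆ X → A.Nonempty →
        min (A.card + k) Y.card ≤ {y ∈ (Y : Set α) | ∃ x ∈ A, x < y}.ncard) ↔
     (∀ B : Finset α, B ⊆ Y → B.Nonempty →
        min (B.card + k) X.card ≤ {x ∈ (X : Set α) | ∃ y ∈ B, x < y}.ncard)) := by
  classical
  have hcard := card_eq_of_edge X Y hreg
  have e1 : ∀ (A : Finset α), {y ∈ (Y : Set α) | ∃ x ∈ A, x < y}.ncard
      = (Y.filter fun y => ∃ x ∈ A, x < y).card := by
    intro A
    rw [← Set.ncard_coe_finset, Finset.coe_filter]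
    simp
  have e2 : ∀ (B : Finset α), {x ∈ (X : Set α) | ∃ y ∈ B, x < y}.ncard
      = (X.filter fun x => ∃ y ∈ B, x < y).card := by
    intro B
    rw [← Set.ncard_coe_finset, Finset.coe_filter]
    simp
  simp only [e1, e2]
  constructor
  · intro h
    exact key_surplus (· < ·) X Y k hcard h
  · intro h
    refine key_surplus (fun y x => x < y) Y X k ?_ h
    intro ⟨y, hy, x, hx, hxy⟩
    exact (hcard ⟨x, hx, y, hy, hxy⟩).symm
end

section
/- Let (X,Y,<) be a finite regular bipartite poset (every edge extends to a perfect matching). Then |X| = |Y|, and this common cardinality equals the width of the bipartite poset, i.e., both X and Y are maximum antichains. -/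
/-- Adjacency in the bipartite comparability graph of `(X, Y, <)`. -/
def bipAdj {α : Type*} [PartialOrder α] (X Y : Finset α) (a b : α) : Prop :=
  (a ∈ X ∧ b ∈ Y ∧ a < b) ∨ (b ∈ X ∧ a ∈ Y ∧ b < a)

/-- A connected regular bipartite poset satisfies `|X| = |Y|`, and this common
cardinality is the width of the bipartite poset: every antichain of the subposet
induced on `X ∪ Y` has size at most `|X|` (so `X` and `Y` are maximum antichains). -/
theorem stmt1 {α : Type*} [PartialOrder α] [Fintype α] [DecidableEq α]
    (X Y : Finset α) (hdisj : Disjoint X Y)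
    (hXanti : IsAntichain (· ≤ ·) (X : Set α))
    (hYanti : IsAntichain (· ≤ ·) (Y : Set α))
    (hdir : ∀ x ∈ X, ∀ y ∈ Y, ¬ y < x)
    (hedge : ∃ x ∈ X, ∃ y ∈ Y, x < y)
    (hconn : ∀ a ∈ X ∪ Y, ∀ b ∈ X ∪ Y, Relation.ReflTransGen (bipAdj X Y) a b)
    (hreg : IsRegularBipartite X Y) :
    X.card = Y.card ∧
      ∀ A : Finset α, A ⊆ X ∪ Y → IsAntichain (· ≤ ·) (A : Set α) → A.card ≤ X.card := by
  obtain ⟨x, hx, y, hy, hxy⟩ := hedge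
  obtain ⟨f, hbij, hlt, -⟩ := hreg x hx y hy hxy
  let e : {a // a ∈ X} ≃ {b // b ∈ Y} := Equiv.ofBijective f hbij
  have hcard : X.card = Y.card := by
    have := Fintype.card_congr e
    simpa [Fintype.card_coe] using this
  refine ⟨hcard, ?_⟩
  intro A hA hAanti
  -- map each element of A into X
  set φ : α → α := fun a => if h : a ∈ Y then (e.symm ⟨a, h⟩ : α) else a with hφ
  have key : ∀ a (h : a ∈ Y), (e.symm ⟨a, h⟩ : α) < a := by
    intro a h
    have := hlt (e.symm ⟨a, h⟩)
    have hfe : f (e.symm ⟨a, h⟩) = ⟨a, h⟩ := Equiv.ofBijective_apply_symm_apply f hbij ⟨a, h⟩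
    rwa [show f (e.symm ⟨a, h⟩) = (⟨a, h⟩ : {b // b ∈ Y}) from hfe] at this
  apply Finset.card_le_card_of_injOn φ
  · intro a ha
    by_cases h : a ∈ Y
    · simp only [hφ, dif_pos h]
      exact (e.symm ⟨a, h⟩).2
    · have := hA ha
      simp only [Finset.mem_union] at this
      simp only [hφ, dif_neg h]
      tauto
  · intro a ha b hb hab
    simp only [Finset.mem_coe] at ha hb
    by_cases hay : a ∈ Y <;> by_cases hby : b ∈ Y
    · simp only [hφ, dif_pos hay, dif_pos hby] at hab
      have : e.symm ⟨a, hay⟩ = e.symm ⟨b, hby⟩ := Subtype.coe_injective hab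
      have := e.symm.injective this
      exact congrArg Subtype.val this
    · simp only [hφ, dif_pos hay, dif_neg hby] at hab
      have hlt' : b < a := hab ▸ key a hay
      exact absurd (hAanti (by exact_mod_cast hb) (by exact_mod_cast ha) hlt'.ne hlt'.le) (fun h => h)
    · simp only [hφ, dif_neg hay, dif_pos hby] at hab
      have hlt' : a < b := hab ▸ key b hby
      exact absurd (hAanti (by exact_mod_cast ha) (by exact_mod_cast hb) hlt'.ne hlt'.le) (fun h => h)
    · simpa [hφ, dif_neg hay, dif_neg hby] using hab
end

section
/- Let (X,Y,<) be a finite connected regular bipartite poset with |X| = |Y| ≥ 2 which is not a complete bipartite poset. Then for every non-empty proper subset A ⊊ X, |A↑ ∩ Y| ≥ |A| + 1; that is, the surplus of a connected non-complete regular bipartite poset is at least 1. -/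
/-- A connected, non-complete regular bipartite poset with `|X| = |Y| ≥ 2` has
surplus at least `1`: every non-empty proper subset `A ⊊ X` satisfies
`|A↑ ∩ Y| ≥ |A| + 1`. -/
theorem stmt2 {α : Type*} [PartialOrder α] [Fintype α] [DecidableEq α]
    (X Y : Finset α) (hdisj : Disjoint X Y)
    (hXanti : IsAntichain (· ≤ ·) (X : Set α))
    (hYanti : IsAntichain (· ≤ ·) (Y : Set α))
    (hdir : ∀ x ∈ X, ∀ y ∈ Y, ¬ y < x)
    (hconn : ∀ a ∈ X ∪ Y, ∀ b ∈ X ∪ Y, Relation.ReflTransGen (bipAdj X Y) a b)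
    (hreg : IsRegularBipartite X Y)
    (hcard : X.card = Y.card) (h2 : 2 ≤ X.card)
    (hnotcomplete : ¬ ∀ x ∈ X, ∀ y ∈ Y, x < y) :
    ∀ A : Finset α, A.Nonempty → A ⊂ X →
      A.card + 1 ≤ {y ∈ (Y : Set α) | ∃ x ∈ A, x < y}.ncard := by
  classical
  intro A hAne hAX
  have hAsub : A ⊆ X := hAX.subset
  set B : Finset α := Y.filter (fun y => ∃ x ∈ A, x < y) with hBdef
  have hset : {y ∈ (Y : Set α) | ∃ x ∈ A, x < y} = (B : Set α) := by
    ext y; simp [hBdef]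
  rw [hset, Set.ncard_coe_finset]
  by_contra hlt
  push_neg at hlt
  have hBle : B.card ≤ A.card := Nat.lt_succ_iff.mp hlt
  -- no edge from X \ A into B
  have noedge : ∀ x ∈ X, x ∉ A → ∀ y ∈ B, ¬ x < y := by
    intro x hx hxA y hyB hxy
    have hyY : y ∈ Y := (Finset.mem_filter.mp hyB).1
    obtain ⟨f, hfbij, hflt, hfx⟩ := hreg x hx y hyY hxy
    -- A as a finset of the subtype
    let A' : Finset {a // a ∈ X} :=
      A.attach.map ⟨fun a => ⟨a.1, hAsub a.2⟩, by intro a b h; cases a; cases b; simpa using h⟩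
    have hA'mem : ∀ s : {a // a ∈ X}, s ∈ A' ↔ s.1 ∈ A := by
      intro s
      simp only [A', Finset.mem_map, Finset.mem_attach, Function.Embedding.coeFn_mk, true_and]
      constructor
      · rintro ⟨a, ha⟩; rw [← ha]; exact a.2
      · intro h; exact ⟨⟨s.1, h⟩, Subtype.ext rfl⟩
    have hA'card : A'.card = A.card := by
      simp [A']
    have hxA' : (⟨x, hx⟩ : {a // a ∈ X}) ∉ A' := by
      rw [hA'mem]; exact hxA
    set S : Finset {a // a ∈ X} := insert ⟨x, hx⟩ A' with hSdef
    have hScard : S.card = A.card + 1 := by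
      rw [hSdef, Finset.card_insert_of_notMem hxA', hA'card]
    have himg : S.image (fun s => ((f s : {b // b ∈ Y}) : α)) ⊆ B := by
      intro b hb
      simp only [Finset.mem_image] at hb
      obtain ⟨s, hs, hsb⟩ := hb
      rcases Finset.mem_insert.mp hs with h | h
      · subst h; rw [hfx] at hsb; rw [← hsb]; exact hyB
      · have hsA : s.1 ∈ A := (hA'mem s).mp h
        have : ((f s : {b // b ∈ Y}) : α) ∈ B := by
          refine Finset.mem_filter.mpr ⟨(f s).2, ⟨s.1, hsA, hflt s⟩⟩
        rw [← hsb]; exact this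
    have hinj : Set.InjOn (fun s => ((f s : {b // b ∈ Y}) : α)) S := by
      intro s _ t _ h
      exact hfbij.1 (Subtype.ext h)
    have hcardle : S.card ≤ B.card := by
      calc S.card = (S.image (fun s => ((f s : {b // b ∈ Y}) : α))).card :=
            (Finset.card_image_of_injOn hinj).symm
        _ ≤ B.card := Finset.card_le_card himg
    omega
  -- A ∪ B is closed under adjacency
  have stay : ∀ c d, bipAdj X Y c d → c ∈ A ∪ B → d ∈ A ∪ B := by
    intro c d hcd hc
    rcases hcd with ⟨hcX, hdY, hltcd⟩ | ⟨hdX, hcY, hltdc⟩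
    · have hcA : c ∈ A := by
        rcases Finset.mem_union.mp hc with h | h
        · exact h
        · exact absurd ((Finset.mem_filter.mp h).1) (Finset.disjoint_left.mp hdisj hcX)
      exact Finset.mem_union_right _ (Finset.mem_filter.mpr ⟨hdY, ⟨c, hcA, hltcd⟩⟩)
    · have hcB : c ∈ B := by
        rcases Finset.mem_union.mp hc with h | h
        · exact absurd hcY (Finset.disjoint_left.mp hdisj (hAsub h))
        · exact h
      by_contra hd
      have hdA : d ∉ A := fun h => hd (Finset.mem_union_left _ h)
      exact noedge d hdX hdA c hcB hltdc
  obtain ⟨a, ha⟩ := hAne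
  obtain ⟨x', hx'X, hx'A⟩ := Finset.exists_of_ssubset hAX
  have hpath := hconn a (Finset.mem_union_left _ (hAsub ha)) x' (Finset.mem_union_left _ hx'X)
  have key : ∀ b, Relation.ReflTransGen (bipAdj X Y) a b → b ∈ A ∪ B := by
    intro b hp
    induction hp with
    | refl => exact Finset.mem_union_left _ ha
    | tail _ e ih => exact stay _ _ e ih
  have hx'mem : x' ∈ A ∪ B := key _ hpath
  rcases Finset.mem_union.mp hx'mem with h | h
  · exact hx'A h
  · exact Finset.disjoint_left.mp hdisj hx'X ((Finset.mem_filter.mp h).1)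
end

section
/- In a rooted tree of 'nodes' where each node N carries a pair (width(N), surplus(N)), if whenever M is a child of N the interval Int(M) is strictly contained in Int(N) and the width of the induced subposet on Int(N) equals width(N), then for any descendant M of N: width(M) ≤ width(N), and if width(M) = width(N) then surplus(M) ≤ surplus(N). That is, characteristics are weakly decreasing in lexicographic order along root-to-leaf paths. -/
/-- The interval of a node `(X, Y, <)`: all elements lying between `X` and `Y`. -/
def nodeInt {α : Type*} [PartialOrder α] (X Y : Finset α) : Set α :=
  {p | (∃ x ∈ X, x ≤ p) ∧ ∃ y ∈ Y, p ≤ y}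

/-- `HasSurplus X Y k` : for every non-empty `A ⊆ X`, `|A↑ ∩ Y| ≥ min(|A|+k, |Y|)`.
The surplus of the node is the largest such `k` (so `surplus M ≤ surplus N` iff
every `k` with `HasSurplus M k` satisfies `HasSurplus N k`). -/
def HasSurplus {α : Type*} [PartialOrder α] (X Y : Finset α) (k : ℕ) : Prop :=
  ∀ A : Finset α, A ⊆ X → A.Nonempty →
    min (A.card + k) Y.card ≤ {y ∈ (Y : Set α) | ∃ x ∈ A, x < y}.ncard

/-- Hall-type lemma: if `P`, `Q` are antichains, no element of `Q` is strictly below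
an element of `P`, and every antichain inside `P ∪ Q` has size at most `|Q|`, then
there is an injection (on `P`) sending each `p ∈ P` to some `q ∈ Q` with `p ≤ q`. -/
lemma hall_aux {α : Type*} [PartialOrder α] [DecidableEq α] (P Q : Finset α)
    (hP : IsAntichain (· ≤ ·) (P : Set α))
    (hQ : IsAntichain (· ≤ ·) (Q : Set α))
    (hno : ∀ q ∈ Q, ∀ p ∈ P, ¬ q < p)
    (hbound : ∀ W : Finset α, W ⊆ P ∪ Q → IsAntichain (· ≤ ·) (W : Set α) →
      W.card ≤ Q.card) :
    ∃ f : α → α, Set.InjOn f (P : Set α) ∧ ∀ p ∈ P, f p ∈ Q ∧ p ≤ f p := by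
  classical
  set t : {x // x ∈ P} → Finset α := fun x => Q.filter (fun q => x.1 ≤ q) with ht
  have hall : ∀ s : Finset {x // x ∈ P}, s.card ≤ (s.biUnion t).card := by
    intro s
    set S : Finset α := s.image Subtype.val with hS
    set T : Finset α := s.biUnion t with hT
    have hSP : S ⊆ P := by
      intro a ha
      obtain ⟨x, _, rfl⟩ := Finset.mem_image.mp ha
      exact x.2
    have hTQ : T ⊆ Q := by
      intro a ha
      obtain ⟨x, _, hx⟩ := Finset.mem_biUnion.mp ha
      exact (Finset.mem_filter.mp hx).1
    have hScard : S.card = s.card := Finset.card_image_of_injective _ Subtype.val_injective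
    -- the key: S ∪ (Q \ T) is an antichain
    have hanti : IsAntichain (· ≤ ·) ((S ∪ (Q \ T) : Finset α) : Set α) := by
      intro u hu v hv huv hle
      simp only [Finset.coe_union, Set.mem_union, Finset.coe_sdiff, Set.mem_diff,
        Finset.mem_coe] at hu hv
      rcases hu with hu | ⟨huQ, huT⟩
      · rcases hv with hv | ⟨hvQ, hvT⟩
        · exact hP (hSP hu) (hSP hv) huv hle
        · -- u ∈ S, v ∈ Q \ T, u ≤ v ⇒ v ∈ T
          apply hvT
          obtain ⟨x, hx, rfl⟩ := Finset.mem_image.mp hu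
          exact Finset.mem_biUnion.mpr ⟨x, hx, Finset.mem_filter.mpr ⟨hvQ, hle⟩⟩
      · rcases hv with hv | ⟨hvQ, hvT⟩
        · exact hno u huQ v (hSP hv) (lt_of_le_of_ne hle huv)
        · exact hQ huQ hvQ huv hle
    have hdisj : Disjoint S (Q \ T) := by
      rw [Finset.disjoint_left]
      intro a ha ha'
      have haQ := Finset.mem_sdiff.mp ha'
      apply haQ.2
      obtain ⟨x, hx, rfl⟩ := Finset.mem_image.mp ha
      exact Finset.mem_biUnion.mpr ⟨x, hx, Finset.mem_filter.mpr ⟨haQ.1, le_refl _⟩⟩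
    have hsub : S ∪ (Q \ T) ⊆ P ∪ Q :=
      Finset.union_subset (hSP.trans Finset.subset_union_left)
        ((Finset.sdiff_subset).trans Finset.subset_union_right)
    have hb := hbound _ hsub hanti
    rw [Finset.card_union_of_disjoint hdisj, Finset.card_sdiff_of_subset hTQ] at hb
    have hTc : T.card ≤ Q.card := Finset.card_le_card hTQ
    omega
  obtain ⟨f0, hf0inj, hf0mem⟩ :=
    (Finset.all_card_le_biUnion_card_iff_exists_injective t).mp hall
  refine ⟨fun a => if h : a ∈ P then f0 ⟨a, h⟩ else a, ?_, ?_⟩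
  · intro a ha b hb hab
    simp only [Finset.mem_coe] at ha hb
    dsimp only at hab
    rw [dif_pos ha, dif_pos hb] at hab
    exact Subtype.ext_iff.mp (hf0inj hab)
  · intro p hp
    dsimp only
    rw [dif_pos hp]
    have := hf0mem ⟨p, hp⟩
    rw [ht, Finset.mem_filter] at this
    exact ⟨this.1, this.2⟩

/-- One step of Proposition 3: containment of intervals plus the width bound. -/
lemma step_aux {α : Type*} [PartialOrder α] [Fintype α]
    (XM YM XN YN : Finset α)
    (hcM : XM.card = YM.card) (hcN : XN.card = YN.card)
    (hXaM : IsAntichain (· ≤ ·) (XM : Set α)) (hYaM : IsAntichain (· ≤ ·) (YM : Set α))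
    (hXaN : IsAntichain (· ≤ ·) (XN : Set α)) (hYaN : IsAntichain (· ≤ ·) (YN : Set α))
    (hXinM : (XM : Set α) ⊆ nodeInt XM YM) (hYinM : (YM : Set α) ⊆ nodeInt XM YM)
    (hXinN : (XN : Set α) ⊆ nodeInt XN YN) (hYinN : (YN : Set α) ⊆ nodeInt XN YN)
    (hwN : ∀ A : Finset α, (A : Set α) ⊆ nodeInt XN YN →
      IsAntichain (· ≤ ·) (A : Set α) → A.card ≤ XN.card)
    (hsub : nodeInt XM YM ⊆ nodeInt XN YN) :
    XM.card ≤ XN.card ∧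
      (XM.card = XN.card → ∀ k, HasSurplus XM YM k → HasSurplus XN YN k) := by
  classical
  have hXMN : (XM : Set α) ⊆ nodeInt XN YN := fun a ha => hsub (hXinM ha)
  have hYMN : (YM : Set α) ⊆ nodeInt XN YN := fun a ha => hsub (hYinM ha)
  have hw1 : XM.card ≤ XN.card := hwN XM hXMN hXaM
  refine ⟨hw1, ?_⟩
  intro heq k hk
  have hYMYN : YM.card = YN.card := by rw [← hcM, heq, hcN]
  -- injection f : XN → XM with x ≤ f x
  obtain ⟨f, hfinj, hfmem⟩ := hall_aux XN XM hXaN hXaM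
    (by
      intro q hq p hp hlt
      obtain ⟨⟨x, hx, hxq⟩, -⟩ := hXMN hq
      exact hXaN hx hp (fun h => absurd (h ▸ hxq) (not_le_of_gt hlt))
        (le_of_lt (lt_of_le_of_lt hxq hlt)))
    (by
      intro W hW hWa
      have : (W : Set α) ⊆ nodeInt XN YN := by
        intro a ha
        rcases Finset.mem_union.mp (hW ha) with h | h
        · exact hXinN h
        · exact hXMN h
      exact heq ▸ hwN W this hWa)
  -- injection g : YM → YN with y ≤ g y
  obtain ⟨g, hginj, hgmem⟩ := hall_aux YM YN hYaM hYaN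
    (by
      intro q hq p hp hlt
      obtain ⟨-, ⟨y, hy, hpy⟩⟩ := hYMN hp
      exact hYaN hq hy (fun h => absurd (h ▸ hpy) (not_le_of_gt hlt))
        (le_of_lt (lt_of_lt_of_le hlt hpy)))
    (by
      intro W hW hWa
      have : (W : Set α) ⊆ nodeInt XN YN := by
        intro a ha
        rcases Finset.mem_union.mp (hW ha) with h | h
        · exact hYMN h
        · exact hYinN h
      exact hcN ▸ hwN W this hWa)
  -- now prove HasSurplus XN YN k
  intro A hA hAne
  set A' : Finset α := A.image f with hA'
  have hA'sub : A' ⊆ XM := by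
    intro a ha
    obtain ⟨x, hx, rfl⟩ := Finset.mem_image.mp ha
    exact (hfmem x (hA hx)).1
  have hA'card : A'.card = A.card :=
    Finset.card_image_of_injOn (fun x hx y hy h => hfinj (hA hx) (hA hy) h)
  have hA'ne : A'.Nonempty := hAne.image f
  have hM := hk A' hA'sub hA'ne
  set SM : Set α := {y ∈ (YM : Set α) | ∃ x ∈ A', x < y} with hSM
  set SN : Set α := {y ∈ (YN : Set α) | ∃ x ∈ A, x < y} with hSN
  have himg : g '' SM ⊆ SN := by
    rintro _ ⟨y, ⟨hyY, x, hxA', hxy⟩, rfl⟩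
    obtain ⟨a, ha, rfl⟩ := Finset.mem_image.mp hxA'
    refine ⟨(hgmem y hyY).1, a, ha, ?_⟩
    exact lt_of_le_of_lt (hfmem a (hA ha)).2 (lt_of_lt_of_le hxy (hgmem y hyY).2)
  have hcardle : SM.ncard ≤ SN.ncard := by
    rw [← Set.ncard_image_of_injOn (hginj.mono (fun y hy => hy.1))]
    exact Set.ncard_le_ncard himg (Set.toFinite _)
  calc min (A.card + k) YN.card = min (A'.card + k) YM.card := by rw [hA'card, hYMYN]
    _ ≤ SM.ncard := hM
    _ ≤ SN.ncard := hcardle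

/-- Proposition 3: along the node tree, characteristics `(width, surplus)` are
weakly decreasing in lexicographic order: a descendant `M` of `N` has
`width M ≤ width N`, and if widths are equal then `surplus M ≤ surplus N`. -/
theorem stmt7 {α ι : Type*} [PartialOrder α] [Fintype α]
    (X Y : ι → Finset α)
    (hcard : ∀ ν, (X ν).card = (Y ν).card)
    (hXanti : ∀ ν, IsAntichain (· ≤ ·) ((X ν) : Set α))
    (hYanti : ∀ ν, IsAntichain (· ≤ ·) ((Y ν) : Set α))
    (hXin : ∀ ν, ((X ν) : Set α) ⊆ nodeInt (X ν) (Y ν))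
    (hYin : ∀ ν, ((Y ν) : Set α) ⊆ nodeInt (X ν) (Y ν))
    (hwidth : ∀ ν, ∀ A : Finset α, (A : Set α) ⊆ nodeInt (X ν) (Y ν) →
      IsAntichain (· ≤ ·) (A : Set α) → A.card ≤ (X ν).card)
    (child : ι → ι → Prop)
    (hchild : ∀ M N, child M N → nodeInt (X M) (Y M) ⊂ nodeInt (X N) (Y N))
    (M N : ι) (hdesc : Relation.TransGen child M N) :
    (X M).card ≤ (X N).card ∧
      ((X M).card = (X N).card →
        ∀ k, HasSurplus (X M) (Y M) k → HasSurplus (X N) (Y N) k) := by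
  have step : ∀ a b : ι, child a b →
      (X a).card ≤ (X b).card ∧
        ((X a).card = (X b).card →
          ∀ k, HasSurplus (X a) (Y a) k → HasSurplus (X b) (Y b) k) := by
    intro a b hab
    exact step_aux (X a) (Y a) (X b) (Y b) (hcard a) (hcard b)
      (hXanti a) (hYanti a) (hXanti b) (hYanti b)
      (hXin a) (hYin a) (hXin b) (hYin b) (hwidth b) (hchild a b hab).subset
  induction hdesc with
  | single h => exact step M _ h
  | tail _ h ih =>
    obtain ⟨ih1, ih2⟩ := ih
    obtain ⟨s1, s2⟩ := step _ _ h
    refine ⟨ih1.trans s1, ?_⟩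
    intro heq k hk
    have h1 : (X M).card = (X _).card := le_antisymm ih1 (heq ▸ s1)
    exact s2 (by omega) k (ih2 h1 k hk)
end

section
/- With the setup of the previous lemma: if K = (Z,T,<) has surplus at least 1 and there exist i, j ∈ I_K with xᵢ incomparable to z_j, then there exists k ∈ I_K such that xᵢ is incomparable with z_k but xᵢ < t_k (and hence xᵢ < y_k). In other words, every non-complete regular sub-node K witnesses a comparability xᵢ < y_k not forced through z_k. -/
/-- Lemma 8, key step: if the sub-node `K = (Z, T, <)` (with `Z = {z_l : l ∈ I_K}`,
`T = {t_l : l ∈ I_K}`, `z_l ≤ t_l`, `x_l < z_l`) has surplus at least `1` and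
`x_i` is incomparable with `z_j` for some `i, j ∈ I_K`, then there is `k ∈ I_K`
with `x_i` incomparable to `z_k` but `x_i < t_k`. -/
theorem stmt11 {α : Type*} [PartialOrder α] [Fintype α] [DecidableEq α] (u' : ℕ)
    (x z t : Fin u' → α) (IK : Finset (Fin u'))
    (hxz : ∀ l ∈ IK, x l < z l)
    (hzt : ∀ l ∈ IK, z l ≤ t l)
    (hzinj : ∀ l ∈ IK, ∀ l' ∈ IK, z l = z l' → l = l')
    (htinj : ∀ l ∈ IK, ∀ l' ∈ IK, t l = t l' → l = l')
    (i j : Fin u') (hi : i ∈ IK) (hj : j ∈ IK)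
    (hnb : ∀ l ∈ IK, ¬ z l ≤ x i)
    (hinc : ¬ x i < z j ∧ ¬ z j < x i)
    (hsurplus : ∀ B : Finset α, B ⊆ IK.image z → B.Nonempty →
      min (B.card + 1) (IK.image t).card ≤
        {c ∈ ((IK.image t : Finset α) : Set α) | ∃ b ∈ B, b < c}.ncard) :
    ∃ k ∈ IK, (¬ x i < z k ∧ ¬ z k < x i) ∧ x i < t k := by
  classical
  set D : Finset (Fin u') := IK.filter (fun l => x i < z l) with hD
  have hDsub : D ⊆ IK := Finset.filter_subset _ _
  have hiD : i ∈ D := by simp [hD, hxz i hi, hi]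
  have hjD : j ∉ D := by simp [hD, hinc.1]
  set B : Finset α := D.image z with hB
  have hBsub : B ⊆ IK.image z := Finset.image_subset_image hDsub
  have hBcard : B.card = D.card :=
    Finset.card_image_of_injOn (fun a ha b hb h => hzinj a (hDsub ha) b (hDsub hb) h)
  have hTcard : (IK.image t).card = IK.card :=
    Finset.card_image_of_injOn (fun a ha b hb h => htinj a ha b hb h)
  have hDlt : D.card < IK.card :=
    Finset.card_lt_card ((Finset.ssubset_iff_of_subset hDsub).mpr ⟨j, hj, hjD⟩)
  have hmin : min (B.card + 1) (IK.image t).card = B.card + 1 := by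
    rw [min_eq_left]; omega
  have hsur := hsurplus B hBsub ⟨z i, Finset.mem_image_of_mem z hiD⟩
  rw [hmin] at hsur
  set S' : Finset α := (IK.image t).filter (fun c => x i < c) with hS'
  have hsubS' : {c ∈ ((IK.image t : Finset α) : Set α) | ∃ b ∈ B, b < c} ⊆ (S' : Set α) := by
    intro c hc
    obtain ⟨hcT, b, hbB, hbc⟩ := hc
    simp only [hS', Finset.coe_filter, Set.mem_setOf_eq]
    refine ⟨hcT, ?_⟩
    obtain ⟨l, hl, rfl⟩ := Finset.mem_image.mp hbB
    exact lt_trans (Finset.mem_filter.mp hl).2 hbc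
  have hScard : B.card + 1 ≤ S'.card := by
    calc B.card + 1 ≤ _ := hsur
    _ ≤ (S' : Set α).ncard := Set.ncard_le_ncard hsubS' S'.finite_toSet
    _ = S'.card := by rw [Set.ncard_coe_finset]
  set E : Finset α := D.image t with hE
  have hEcard : E.card = D.card :=
    Finset.card_image_of_injOn (fun a ha b hb h => htinj a (hDsub ha) b (hDsub hb) h)
  have hex : ∃ c ∈ S', c ∉ E := by
    by_contra h
    push_neg at h
    have := Finset.card_le_card h
    omega
  obtain ⟨c, hcS', hcE⟩ := hex
  have hmem := Finset.mem_filter.mp hcS'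
  obtain ⟨k, hk, rfl⟩ := Finset.mem_image.mp hmem.1
  refine ⟨k, hk, ⟨?_, fun h => hnb k hk h.le⟩, hmem.2⟩
  intro hlt
  exact hcE (Finset.mem_image_of_mem t (Finset.mem_filter.mpr ⟨hk, hlt⟩))
end

section
/- Suppose a node N = (X,Y,<) is a complete bipartite poset with X = {x₀,…,x_{u−1}}, Y = {y₀,…,y_{u−1}}, and Z = {z₀,…,z_{u−1}} is an antichain with x_i < z_k < y_j for all i,j,k (both children (X,Z,<) and (Z,Y,<) are complete bipartite). Assign to each edge (x_i < y_j) of N a distinct color, and color edges (x_i < z_k) and (z_k < y_j) with the color of (x_i < y_j) whenever k = (i + j) mod u. Then: (a) every edge of (X,Z,<) and of (Z,Y,<) receives exactly one color, and (b) for every color γ, the set of endpoints of edges colored γ forms a chain. -/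
/-!
The edge `x_i < z_k` is coloured `(i, k - i)` and the edge `z_k < y_j` is coloured `(k - j, j)`,
so in both cases the colour `γ` forces `k = γ.1 + γ.2`. Hence the edges of colour `γ` are exactly
`x_{γ.1} < z_{γ.1 + γ.2}` and `z_{γ.1 + γ.2} < y_{γ.2}`, and their endpoints form the chain
`x_{γ.1} < z_{γ.1 + γ.2} < y_{γ.2}`.
-/

section ShufflingColors

variable {G α : Type*} [AddCommGroup G]

theorem Prod.mk_sub_left_eq_iff {i k : G} {γ : G × G} :
    (i, k - i) = γ ↔ i = γ.1 ∧ k = γ.1 + γ.2 := by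
  obtain ⟨a, b⟩ := γ
  rw [Prod.mk.injEq, sub_eq_iff_eq_add']
  exact and_congr_right fun hi => by rw [hi]

theorem Prod.mk_sub_right_eq_iff {k j : G} {γ : G × G} :
    (k - j, j) = γ ↔ j = γ.2 ∧ k = γ.1 + γ.2 := by
  obtain ⟨a, b⟩ := γ
  rw [Prod.mk.injEq, sub_eq_iff_eq_add, and_comm]
  exact and_congr_right fun hj => by rw [hj]

theorem shuffle_colorClass_eq (x y z : G → α) (γ : G × G) :
    {p : α | ∃ i k : G, (i, k - i) = γ ∧ (p = x i ∨ p = z k)} ∪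
      {p : α | ∃ k j : G, (k - j, j) = γ ∧ (p = z k ∨ p = y j)} =
    {x γ.1, z (γ.1 + γ.2), y γ.2} := by
  ext p
  simp only [Set.mem_union, Set.mem_ofPred_eq, Prod.mk_sub_left_eq_iff, Prod.mk_sub_right_eq_iff,
    Set.mem_insert_iff, Set.mem_singleton_iff]
  constructor
  · rintro (⟨i, k, ⟨rfl, rfl⟩, hp | hp⟩ | ⟨k, j, ⟨rfl, rfl⟩, hp | hp⟩) <;>
      simp only [hp, true_or, or_true]
  · rintro (hp | hp | hp)
    · exact Or.inl ⟨_, _, ⟨rfl, rfl⟩, Or.inl hp⟩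
    · exact Or.inl ⟨_, _, ⟨rfl, rfl⟩, Or.inr hp⟩
    · exact Or.inr ⟨_, _, ⟨rfl, rfl⟩, Or.inr hp⟩

end ShufflingColors

theorem isChain_triple {α : Type*} [Preorder α] {a b c : α} (hab : a ≤ b) (hbc : b ≤ c) :
    IsChain (· ≤ ·) {a, b, c} :=
  (IsChain.pair hbc).insert fun d hd _ => by
    rcases hd with rfl | rfl
    exacts [Or.inl hab, Or.inl (hab.trans hbc)]

theorem stmt13_general {α : Type*} [PartialOrder α] (u : ℕ) [NeZero u]
    (x y z : Fin u → α)
    (hxz : ∀ i k : Fin u, x i < z k)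
    (hzy : ∀ k j : Fin u, z k < y j) :
    -- (a) each edge of (X,Z,<) and of (Z,Y,<) receives exactly one color
    (∀ i k : Fin u, ∃! γ : Fin u × Fin u, γ = (i, k - i)) ∧
    (∀ k j : Fin u, ∃! γ : Fin u × Fin u, γ = (k - j, j)) ∧
    -- (b) for every color γ the endpoints of all edges colored γ form a chain
    (∀ γ : Fin u × Fin u, IsChain (· ≤ ·)
      ({p : α | ∃ i k : Fin u, (i, k - i) = γ ∧ (p = x i ∨ p = z k)} ∪
       {p : α | ∃ k j : Fin u, (k - j, j) = γ ∧ (p = z k ∨ p = y j)})) := by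
  refine ⟨fun _ _ => existsUnique_eq, fun _ _ => existsUnique_eq, fun γ => ?_⟩
  rw [shuffle_colorClass_eq]
  exact isChain_triple (hxz _ _).le (hzy _ _).le

/-- Shuffling colors: `N = (X, Y, <)` is complete bipartite with
`X = {x₀,…,x_{u−1}}`, `Y = {y₀,…,y_{u−1}}`, and `Z = {z₀,…,z_{u−1}}` is an
antichain with `x_i < z_k < y_j` for all `i, j, k`.  Edge `(x_i < y_j)` gets the
distinct color `(i, j)`; edges `(x_i < z_k)` and `(z_k < y_j)` inherit the color of
`(x_i < y_j)` whenever `k = (i + j) mod u`.  Then (a) every edge of `(X, Z, <)` and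
`(Z, Y, <)` receives exactly one color, and (b) for every color the endpoints of
the edges with this color form a chain. -/
theorem stmt13 {α : Type*} [PartialOrder α] (u : ℕ) [NeZero u]
    (x y z : Fin u → α)
    (hX : ∀ i j : Fin u, i ≠ j → ¬ x i ≤ x j)
    (hY : ∀ i j : Fin u, i ≠ j → ¬ y i ≤ y j)
    (hZ : ∀ i j : Fin u, i ≠ j → ¬ z i ≤ z j)
    (hxz : ∀ i k : Fin u, x i < z k)
    (hzy : ∀ k j : Fin u, z k < y j) :
    -- (a) each edge of (X,Z,<) and of (Z,Y,<) receives exactly one color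
    (∀ i k : Fin u, ∃! γ : Fin u × Fin u, γ = (i, k - i)) ∧
    (∀ k j : Fin u, ∃! γ : Fin u × Fin u, γ = (k - j, j)) ∧
    -- (b) for every color γ the endpoints of all edges colored γ form a chain
    (∀ γ : Fin u × Fin u, IsChain (· ≤ ·)
      ({p : α | ∃ i k : Fin u, (i, k - i) = γ ∧ (p = x i ∨ p = z k)} ∪
       {p : α | ∃ k j : Fin u, (k - j, j) = γ ∧ (p = z k ∨ p = y j)})) :=
  stmt13_general u x y z hxz hzy
end
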